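/- arXiv:1806.08837 — 3 statements merged into one kernel-verified Lean document; each statement's English description precedes it below -/
import Mathlib

section
/- Let d ≥ 1, t ∈ (0,1), and let f, g : ℝ^d → [0,∞) be Borel measurable. For λ > 0 set S₀(λ) = {(s₁,s₂) ∈ ℚ₊² : s₁^{1−t} s₂^{t} > λ}, where ℚ₊ denotes the non-negative rationals. Then the superlevel set {z ∈ ℝ^d : f□g(z) > λ} equals the countable union ⋃_{(s₁,s₂) ∈ S₀(λ)} ((1−t)·{x : f(x) > s₁} + t·{y : g(y) > s₂}), where the sum is the Minkowski sum of the scaled sets. -/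
open MeasureTheory Set Pointwise
open scoped ENNReal NNReal

noncomputable section

/-- The sup-convolution `f□g(z) = sup{ f(x)^(1-t) g(y)^t : (1-t)x + ty = z }`,
valued in `[0,∞]`. -/
def supConv {E : Type*} [AddCommMonoid E] [Module ℝ E] (t : ℝ) (f g : E → ℝ≥0∞)
    (z : E) : ℝ≥0∞ :=
  ⨆ (x : E) (y : E) (_ : (1 - t) • x + t • y = z), f x ^ (1 - t) * g y ^ t

/-- The superlevel set `{f□g > λ}` is the countable union over pairs of nonnegative
rationals `(s₁, s₂)` with `s₁^(1-t) s₂^t > λ` of the Minkowski sums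
`(1-t)•{f > s₁} + t•{g > s₂}`. -/
theorem superlevel_supConv_eq_iUnion (d : ℕ) (hd : 1 ≤ d) (t : ℝ) (ht : t ∈ Set.Ioo (0:ℝ) 1)
    (f g : EuclideanSpace ℝ (Fin d) → ℝ≥0) (hf : Measurable f) (hg : Measurable g)
    (lam : ℝ) (hlam : 0 < lam) :
    {z : EuclideanSpace ℝ (Fin d) |
        ENNReal.ofReal lam < supConv t (fun x => (f x : ℝ≥0∞)) (fun y => (g y : ℝ≥0∞)) z}
      = ⋃ (s₁ : ℚ) (s₂ : ℚ) (_ : 0 ≤ s₁) (_ : 0 ≤ s₂)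
          (_ : lam < (s₁ : ℝ) ^ (1 - t) * (s₂ : ℝ) ^ t),
          ((1 - t) • {x : EuclideanSpace ℝ (Fin d) | (s₁ : ℝ) < (f x : ℝ)}
            + t • {y : EuclideanSpace ℝ (Fin d) | (s₂ : ℝ) < (g y : ℝ)}) := by
  obtain ⟨ht0, ht1⟩ := ht
  have h1t : (0:ℝ) < 1 - t := by linarith
  ext z
  simp only [Set.mem_setOf_eq, Set.mem_iUnion]
  constructor
  · intro hz
    rw [supConv] at hz
    obtain ⟨x, hx⟩ := lt_iSup_iff.mp hz
    obtain ⟨y, hy⟩ := lt_iSup_iff.mp hx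
    obtain ⟨hxy, hlt⟩ := lt_iSup_iff.mp hy
    rw [← ENNReal.coe_rpow_of_nonneg _ h1t.le, ← ENNReal.coe_rpow_of_nonneg _ ht0.le,
      ← ENNReal.coe_mul, ← ENNReal.ofReal_coe_nnreal] at hlt
    have hab : lam < (f x : ℝ) ^ (1 - t) * (g y : ℝ) ^ t := by
      have := (ENNReal.ofReal_lt_ofReal_iff_of_nonneg hlam.le).mp hlt
      simpa using this
    set a : ℝ := (f x : ℝ) with ha
    set b : ℝ := (g y : ℝ) with hb
    have ha0 : 0 < a := by
      by_contra h
      push_neg at h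
      have : a = 0 := le_antisymm h (f x).coe_nonneg
      rw [this, Real.zero_rpow h1t.ne', zero_mul] at hab
      linarith
    have hb0 : 0 < b := by
      by_contra h
      push_neg at h
      have : b = 0 := le_antisymm h (g y).coe_nonneg
      rw [this, Real.zero_rpow ht0.ne', mul_zero] at hab
      linarith
    have hP : 0 < a ^ (1 - t) * b ^ t :=
      mul_pos (Real.rpow_pos_of_pos ha0 _) (Real.rpow_pos_of_pos hb0 _)
    obtain ⟨c, hc1, hc2⟩ := exists_between ((div_lt_one hP).mpr hab)
    have hc0 : 0 < c := lt_trans (div_pos hlam hP) hc1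
    obtain ⟨s₁, hs₁l, hs₁u⟩ := exists_rat_btwn (show c * a < a by nlinarith)
    obtain ⟨s₂, hs₂l, hs₂u⟩ := exists_rat_btwn (show c * b < b by nlinarith)
    have hs₁0 : (0:ℝ) < (s₁ : ℝ) := lt_trans (by positivity) hs₁l
    have hs₂0 : (0:ℝ) < (s₂ : ℝ) := lt_trans (by positivity) hs₂l
    refine ⟨s₁, s₂, by exact_mod_cast hs₁0.le, by exact_mod_cast hs₂0.le, ?_, ?_⟩
    · have h1 : (c * a) ^ (1 - t) < (s₁ : ℝ) ^ (1 - t) :=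
        Real.rpow_lt_rpow (by positivity) hs₁l h1t
      have h2 : (c * b) ^ t < (s₂ : ℝ) ^ t :=
        Real.rpow_lt_rpow (by positivity) hs₂l ht0
      have hkey : c * (a ^ (1 - t) * b ^ t) ≤ (c * a) ^ (1 - t) * (c * b) ^ t := by
        rw [Real.mul_rpow hc0.le ha0.le, Real.mul_rpow hc0.le hb0.le]
        have : c ^ (1 - t) * c ^ t = c := by
          rw [← Real.rpow_add hc0]; simp
        nlinarith [this]
      have hlc : lam < c * (a ^ (1 - t) * b ^ t) := by
        rw [div_lt_iff₀ hP] at hc1; linarith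
      calc lam < c * (a ^ (1 - t) * b ^ t) := hlc
        _ ≤ (c * a) ^ (1 - t) * (c * b) ^ t := hkey
        _ < (s₁ : ℝ) ^ (1 - t) * (s₂ : ℝ) ^ t := by
            apply mul_lt_mul'' h1 h2 <;> positivity
    · exact ⟨(1 - t) • x, ⟨x, hs₁u, rfl⟩, t • y, ⟨y, hs₂u, rfl⟩, hxy⟩
  · rintro ⟨s₁, s₂, hs₁, hs₂, hls, hz⟩
    obtain ⟨u, ⟨x, hx, rfl⟩, v, ⟨y, hy, rfl⟩, huv⟩ := hz
    simp only [Set.mem_setOf_eq] at hx hy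
    have hs₁' : (0:ℝ) ≤ (s₁:ℝ) := by exact_mod_cast hs₁
    have hs₂' : (0:ℝ) ≤ (s₂:ℝ) := by exact_mod_cast hs₂
    have hab : lam < (f x : ℝ) ^ (1 - t) * (g y : ℝ) ^ t := by
      calc lam < (s₁ : ℝ) ^ (1 - t) * (s₂ : ℝ) ^ t := hls
        _ < (f x : ℝ) ^ (1 - t) * (g y : ℝ) ^ t := by
            apply mul_lt_mul'' (Real.rpow_lt_rpow hs₁' hx h1t)
              (Real.rpow_lt_rpow hs₂' hy ht0) <;> positivity
    have hlt : ENNReal.ofReal lam < (f x : ℝ≥0∞) ^ (1 - t) * (g y : ℝ≥0∞) ^ t := by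
      rw [← ENNReal.coe_rpow_of_nonneg _ h1t.le, ← ENNReal.coe_rpow_of_nonneg _ ht0.le,
        ← ENNReal.coe_mul, ← ENNReal.ofReal_coe_nnreal]
      rw [ENNReal.ofReal_lt_ofReal_iff_of_nonneg hlam.le]
      simpa using hab
    refine lt_of_lt_of_le hlt ?_
    exact le_iSup_of_le x (le_iSup_of_le y (le_iSup_of_le huv le_rfl))
end
end

section
/- Let t ∈ (0,1) and let μ be a measure on ℝ^d with a log-concave density φ, i.e. φ((1−t)x + ty) ≥ φ(x)^{1−t} φ(y)^{t} for all x, y ∈ ℝ^d. If non-negative Borel functions u, v, w : ℝ^d → [0,∞) satisfy u((1−t)x + ty) ≥ v(x)^{1−t} w(y)^{t} for all x, y ∈ ℝ^d, then ∫ u dμ ≥ (∫ v dμ)^{1−t} (∫ w dμ)^{t}. -/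
open MeasureTheory Set Pointwise
open scoped ENNReal NNReal

noncomputable section

namespace PrekopaLeindlerAux

/-- One-dimensional additive measure inequality for Minkowski sums. -/
lemma volume_add_le {A B S : Set ℝ} (hA : MeasurableSet A) (hB : MeasurableSet B)
    (hAne : A.Nonempty) (hBne : B.Nonempty) (hsub : A + B ⊆ S) :
    volume A + volume B ≤ volume S := by
  have key : ∀ K L : Set ℝ, IsCompact K → IsCompact L → K.Nonempty → L.Nonempty →
      K ⊆ A → L ⊆ B → volume K + volume L ≤ volume S := by
    intro K L hK hL hKne hLne hKA hLB
    set a := sSup K with ha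
    set b := sInf L with hb
    have haK : a ∈ K := hK.sSup_mem hKne
    have hbL : b ∈ L := hL.sInf_mem hLne
    set U : Set ℝ := (fun x => x + b) '' K with hUdef
    set V : Set ℝ := (fun y => a + y) '' L with hVdef
    have hU : volume U = volume K := by
      rw [hUdef, Set.image_add_right]
      exact measure_preimage_add_right volume (-b) K
    have hV : volume V = volume L := by
      rw [hVdef, Set.image_add_left]
      exact measure_preimage_add volume (-a) L
    have hUS : U ⊆ S := by
      rintro _ ⟨k, hk, rfl⟩
      exact hsub (Set.add_mem_add (hKA hk) (hLB hbL))
    have hVS : V ⊆ S := by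
      rintro _ ⟨l, hl, rfl⟩
      exact hsub (Set.add_mem_add (hKA haK) (hLB hl))
    have hmeasV : MeasurableSet V :=
      ((hL.image (continuous_const.add continuous_id)).isClosed).measurableSet
    have hint : U ∩ V ⊆ {a + b} := by
      rintro z ⟨⟨k, hk, rfl⟩, ⟨l, hl, hzl⟩⟩
      have h1 : k + b ≤ a + b := add_le_add_left (le_csSup hK.bddAbove hk) b
      have hzl' : a + l = k + b := hzl
      have h2 : a + b ≤ k + b := by
        rw [← hzl']; exact add_le_add_right (csInf_le hL.bddBelow hl) a
      exact Set.mem_singleton_iff.2 (le_antisymm h1 h2)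
    calc volume K + volume L = volume U + volume V := by rw [hU, hV]
      _ = volume (U ∪ V) + volume (U ∩ V) := (measure_union_add_inter U hmeasV).symm
      _ ≤ volume S + volume {a + b} :=
          add_le_add (measure_mono (Set.union_subset hUS hVS)) (measure_mono hint)
      _ = volume S := by rw [Real.volume_singleton, add_zero]
  by_contra hcon
  push_neg at hcon
  rcases eq_or_ne (volume A) 0 with hA0 | hA0
  · rw [hA0, zero_add] at hcon
    obtain ⟨L, hLB, hLc, hSL⟩ := hB.exists_lt_isCompact hcon
    have hLne : L.Nonempty := nonempty_of_measure_ne_zero ((zero_le).trans_lt hSL).ne'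
    obtain ⟨x, hx⟩ := hAne
    have h1 : {x} + L ⊆ S :=
      (Set.add_subset_add (Set.singleton_subset_iff.2 hx) hLB).trans hsub
    have h2 : volume ({x} + L) = volume L := by
      rw [Set.singleton_add, Set.image_add_left]
      exact measure_preimage_add volume (-x) L
    have hle : volume L ≤ volume S := by rw [← h2]; exact measure_mono h1
    exact absurd hSL (not_lt.2 hle)
  · rcases eq_or_ne (volume B) 0 with hB0 | hB0
    · rw [hB0, add_zero] at hcon
      obtain ⟨K, hKA, hKc, hSK⟩ := hA.exists_lt_isCompact hcon
      have hKne : K.Nonempty := nonempty_of_measure_ne_zero ((zero_le).trans_lt hSK).ne'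
      obtain ⟨y, hy⟩ := hBne
      have h1 : K + {y} ⊆ S :=
        (Set.add_subset_add hKA (Set.singleton_subset_iff.2 hy)).trans hsub
      have h2 : volume (K + {y}) = volume K := by
        rw [Set.add_singleton, Set.image_add_right]
        exact measure_preimage_add_right volume (-y) K
      have hle : volume K ≤ volume S := by rw [← h2]; exact measure_mono h1
      exact absurd hSK (not_lt.2 hle)
    · obtain ⟨r₁, hr₁, r₂, hr₂, hS⟩ := ENNReal.exists_lt_add_of_lt_add hcon hA0 hB0
      obtain ⟨K, hKA, hKc, hrK⟩ := hA.exists_lt_isCompact hr₁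
      obtain ⟨L, hLB, hLc, hrL⟩ := hB.exists_lt_isCompact hr₂
      have hKne : K.Nonempty := nonempty_of_measure_ne_zero ((zero_le).trans_lt hrK).ne'
      have hLne : L.Nonempty := nonempty_of_measure_ne_zero ((zero_le).trans_lt hrL).ne'
      have := key K L hKc hLc hKne hLne hKA hLB
      exact absurd (hS.trans_le ((add_le_add hrK.le hrL.le).trans this)) (lt_irrefl _)

/-- Weighted AM-GM in `ℝ≥0∞`. -/
lemma geom_le_arith (t : ℝ) (ht : t ∈ Set.Ioo (0:ℝ) 1) (a b : ℝ≥0∞) :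
    a ^ (1 - t) * b ^ t ≤ ENNReal.ofReal (1 - t) * a + ENNReal.ofReal t * b := by
  obtain ⟨ht0, ht1⟩ := ht
  have h1t : (0:ℝ) < 1 - t := by linarith
  rcases eq_or_ne a ∞ with rfl | ha
  · have : ENNReal.ofReal (1 - t) * (⊤:ℝ≥0∞) = ⊤ :=
      ENNReal.mul_top (by simp [ENNReal.ofReal_eq_zero]; linarith)
    rw [this, top_add]; exact le_top
  rcases eq_or_ne b ∞ with rfl | hb
  · have : ENNReal.ofReal t * (⊤:ℝ≥0∞) = ⊤ :=
      ENNReal.mul_top (by simp [ENNReal.ofReal_eq_zero]; linarith)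
    rw [this, add_top]; exact le_top
  lift a to ℝ≥0 using ha
  lift b to ℝ≥0 using hb
  have hw₁ : ((Real.toNNReal (1 - t)) : ℝ) = 1 - t := Real.coe_toNNReal _ h1t.le
  have hw₂ : ((Real.toNNReal t) : ℝ) = t := Real.coe_toNNReal _ ht0.le
  have hw : Real.toNNReal (1 - t) + Real.toNNReal t = 1 := by
    apply NNReal.coe_injective
    push_cast [hw₁, hw₂]
    ring
  have key := NNReal.geom_mean_le_arith_mean2_weighted
    (Real.toNNReal (1 - t)) (Real.toNNReal t) a b hw
  rw [hw₁, hw₂] at key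
  have key2 := ENNReal.coe_le_coe.2 key
  rw [ENNReal.coe_mul, ENNReal.coe_add, ENNReal.coe_mul, ENNReal.coe_mul,
    ENNReal.coe_rpow_of_nonneg _ h1t.le, ENNReal.coe_rpow_of_nonneg _ ht0.le] at key2
  simpa [ENNReal.ofReal] using key2

lemma iSup_min_natCast (a : ℝ≥0∞) : ⨆ n : ℕ, min a (n : ℝ≥0∞) = a := by
  refine le_antisymm (iSup_le fun n => min_le_left _ _) ?_
  rcases eq_or_ne a ∞ with rfl | ha
  · calc (⊤:ℝ≥0∞) = ⨆ n : ℕ, (n : ℝ≥0∞) := ENNReal.iSup_natCast.symm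
      _ ≤ ⨆ n : ℕ, min ⊤ (n : ℝ≥0∞) := by simp
  · obtain ⟨n, hn⟩ := ENNReal.exists_nat_gt ha
    exact le_iSup_of_le n (by simp [min_eq_left hn.le])

/-- The linearized one-dimensional Prékopa–Leindler inequality for normalized functions. -/
lemma dim1_linear (t : ℝ) (ht : t ∈ Set.Ioo (0:ℝ) 1)
    (f g h : ℝ → ℝ≥0∞) (hf : Measurable f) (hg : Measurable g) (hh : Measurable h)
    (hf1 : ∀ x, f x ≤ 1) (hg1 : ∀ y, g y ≤ 1) (hh1 : ∀ z, h z ≤ 1)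
    (hfs : (⨆ x, f x) = 1) (hgs : (⨆ y, g y) = 1)
    (hc : ∀ x y, f x ^ (1 - t) * g y ^ t ≤ h ((1 - t) * x + t * y)) :
    ENNReal.ofReal (1 - t) * (∫⁻ x, f x) + ENNReal.ofReal t * (∫⁻ y, g y) ≤ ∫⁻ z, h z := by
  obtain ⟨ht0, ht1⟩ := ht
  have h1t : (0:ℝ) < 1 - t := by linarith
  -- real-valued versions
  set ft : ℝ → ℝ := fun x => (f x).toReal with hftdef
  set gt : ℝ → ℝ := fun y => (g y).toReal with hgtdef
  set htt : ℝ → ℝ := fun z => (h z).toReal with httdef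
  have hfne : ∀ x, f x ≠ ∞ := fun x => ((hf1 x).trans_lt ENNReal.one_lt_top).ne
  have hgne : ∀ y, g y ≠ ∞ := fun y => ((hg1 y).trans_lt ENNReal.one_lt_top).ne
  have hhne : ∀ z, h z ≠ ∞ := fun z => ((hh1 z).trans_lt ENNReal.one_lt_top).ne
  have hftm : Measurable ft := hf.ennreal_toReal
  have hgtm : Measurable gt := hg.ennreal_toReal
  have httm : Measurable htt := hh.ennreal_toReal
  -- layer cake representations
  have layf : ∫⁻ x, f x = ∫⁻ u in Set.Ioi (0:ℝ), volume {x | u < ft x} := by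
    rw [← lintegral_eq_lintegral_meas_lt volume (ae_of_all _ fun x => ENNReal.toReal_nonneg)
      hftm.aemeasurable]
    exact lintegral_congr fun x => (ENNReal.ofReal_toReal (hfne x)).symm
  have layg : ∫⁻ y, g y = ∫⁻ u in Set.Ioi (0:ℝ), volume {y | u < gt y} := by
    rw [← lintegral_eq_lintegral_meas_lt volume (ae_of_all _ fun y => ENNReal.toReal_nonneg)
      hgtm.aemeasurable]
    exact lintegral_congr fun y => (ENNReal.ofReal_toReal (hgne y)).symm
  have layh : ∫⁻ z, h z = ∫⁻ u in Set.Ioi (0:ℝ), volume {z | u < htt z} := by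
    rw [← lintegral_eq_lintegral_meas_lt volume (ae_of_all _ fun z => ENNReal.toReal_nonneg)
      httm.aemeasurable]
    exact lintegral_congr fun z => (ENNReal.ofReal_toReal (hhne z)).symm
  set Mf : ℝ → ℝ≥0∞ := fun u => volume {x | u < ft x} with hMfdef
  set Mg : ℝ → ℝ≥0∞ := fun u => volume {y | u < gt y} with hMgdef
  set Mh : ℝ → ℝ≥0∞ := fun u => volume {z | u < htt z} with hMhdef
  have hMfanti : Antitone Mf := fun u v huv =>
    measure_mono (fun x hx => lt_of_le_of_lt huv hx)
  have hMganti : Antitone Mg := fun u v huv =>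
    measure_mono (fun x hx => lt_of_le_of_lt huv hx)
  have hMhanti : Antitone Mh := fun u v huv =>
    measure_mono (fun x hx => lt_of_le_of_lt huv hx)
  -- key pointwise inequality on (0,1)
  have key : ∀ u ∈ Set.Ioo (0:ℝ) 1,
      ENNReal.ofReal (1 - t) * Mf u + ENNReal.ofReal t * Mg u ≤ Mh u := by
    intro u hu
    set A : Set ℝ := {x | u < ft x} with hAdef
    set B : Set ℝ := {y | u < gt y} with hBdef
    have hAm : MeasurableSet A := measurableSet_lt measurable_const hftm
    have hBm : MeasurableSet B := measurableSet_lt measurable_const hgtm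
    have hofu : ENNReal.ofReal u < 1 := by
      rw [← ENNReal.ofReal_one]
      exact ENNReal.ofReal_lt_ofReal_iff_of_nonneg hu.1.le |>.2 hu.2
    have hAne : A.Nonempty := by
      rw [← hfs] at hofu
      obtain ⟨x, hx⟩ := lt_iSup_iff.1 hofu
      refine ⟨x, ?_⟩
      have := (ENNReal.toReal_lt_toReal ENNReal.ofReal_ne_top (hfne x)).2 hx
      rwa [ENNReal.toReal_ofReal hu.1.le] at this
    have hBne : B.Nonempty := by
      rw [← hgs] at hofu
      obtain ⟨y, hy⟩ := lt_iSup_iff.1 hofu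
      refine ⟨y, ?_⟩
      have := (ENNReal.toReal_lt_toReal ENNReal.ofReal_ne_top (hgne y)).2 hy
      rwa [ENNReal.toReal_ofReal hu.1.le] at this
    have hsub : ((1 - t) • A) + (t • B) ⊆ {z | u < htt z} := by
      rintro z ⟨az, ⟨x, hx, rfl⟩, bz, ⟨y, hy, rfl⟩, rfl⟩
      have hfx : ENNReal.ofReal u < f x := by
        have h1 : ENNReal.ofReal u < ENNReal.ofReal (ft x) :=
          (ENNReal.ofReal_lt_ofReal_iff_of_nonneg hu.1.le).2 hx
        rwa [ENNReal.ofReal_toReal (hfne x)] at h1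
      have hgy : ENNReal.ofReal u < g y := by
        have h1 : ENNReal.ofReal u < ENNReal.ofReal (gt y) :=
          (ENNReal.ofReal_lt_ofReal_iff_of_nonneg hu.1.le).2 hy
        rwa [ENNReal.ofReal_toReal (hgne y)] at h1
      have hu0 : ENNReal.ofReal u ≠ 0 := by
        simp [ENNReal.ofReal_eq_zero, not_le, hu.1]
      have hlt : ENNReal.ofReal u < h ((1 - t) * x + t * y) := by
        have e1 : ENNReal.ofReal u = ENNReal.ofReal u ^ (1 - t) * ENNReal.ofReal u ^ t := by
          rw [← ENNReal.rpow_add (1 - t) t hu0 ENNReal.ofReal_ne_top]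
          norm_num
        calc ENNReal.ofReal u = ENNReal.ofReal u ^ (1 - t) * ENNReal.ofReal u ^ t := e1
          _ < f x ^ (1 - t) * g y ^ t :=
            ENNReal.mul_lt_mul (ENNReal.rpow_lt_rpow hfx h1t) (ENNReal.rpow_lt_rpow hgy ht0)
          _ ≤ h ((1 - t) * x + t * y) := hc x y
      have : u < htt ((1 - t) * x + t * y) := by
        have := (ENNReal.toReal_lt_toReal ENNReal.ofReal_ne_top
          (hhne ((1 - t) * x + t * y))).2 hlt
        rwa [ENNReal.toReal_ofReal hu.1.le] at this
      simpa [smul_eq_mul] using this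
    have hvol := volume_add_le (hAm.const_smul₀ (1 - t)) (hBm.const_smul₀ t)
      (hAne.smul_set) (hBne.smul_set) hsub
    have e1 : volume ((1 - t) • A) = ENNReal.ofReal (1 - t) * volume A := by
      rw [Measure.addHaar_smul_of_nonneg volume h1t.le A]
      simp
    have e2 : volume (t • B) = ENNReal.ofReal t * volume B := by
      rw [Measure.addHaar_smul_of_nonneg volume ht0.le B]
      simp
    rw [e1, e2] at hvol
    exact hvol
  -- the integrand vanishes above 1
  have hMf0 : ∀ u ∈ Set.Ici (1:ℝ), Mf u = 0 := by
    intro u hu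
    have : {x | u < ft x} = ∅ := by
      rw [Set.eq_empty_iff_forall_notMem]
      intro x hx
      have h1 : ft x ≤ 1 := by
        have := ENNReal.toReal_mono ENNReal.one_ne_top (hf1 x)
        simpa using this
      exact absurd hx (not_lt.2 (h1.trans hu))
    simp [hMfdef, this]
  have hMg0 : ∀ u ∈ Set.Ici (1:ℝ), Mg u = 0 := by
    intro u hu
    have : {y | u < gt y} = ∅ := by
      rw [Set.eq_empty_iff_forall_notMem]
      intro y hy
      have h1 : gt y ≤ 1 := by
        have := ENNReal.toReal_mono ENNReal.one_ne_top (hg1 y)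
        simpa using this
      exact absurd hy (not_lt.2 (h1.trans hu))
    simp [hMgdef, this]
  have hdisj : Disjoint (Set.Ioo (0:ℝ) 1) (Set.Ici (1:ℝ)) := by
    rw [Set.disjoint_left]
    intro u hu h1u
    exact absurd hu.2 (not_lt.2 h1u)
  have hsplitset : Set.Ioo (0:ℝ) 1 ∪ Set.Ici 1 = Set.Ioi 0 :=
    Set.Ioo_union_Ici_eq_Ioi zero_lt_one
  have splitf : ∫⁻ u in Set.Ioi (0:ℝ), Mf u = ∫⁻ u in Set.Ioo (0:ℝ) 1, Mf u := by
    rw [← hsplitset, lintegral_union measurableSet_Ici hdisj,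
      setLIntegral_congr_fun measurableSet_Ici hMf0]
    simp
  have splitg : ∫⁻ u in Set.Ioi (0:ℝ), Mg u = ∫⁻ u in Set.Ioo (0:ℝ) 1, Mg u := by
    rw [← hsplitset, lintegral_union measurableSet_Ici hdisj,
      setLIntegral_congr_fun measurableSet_Ici hMg0]
    simp
  calc ENNReal.ofReal (1 - t) * (∫⁻ x, f x) + ENNReal.ofReal t * (∫⁻ y, g y)
      = ENNReal.ofReal (1 - t) * (∫⁻ u in Set.Ioo (0:ℝ) 1, Mf u)
        + ENNReal.ofReal t * (∫⁻ u in Set.Ioo (0:ℝ) 1, Mg u) := by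
        rw [layf, layg, splitf, splitg]
    _ = ∫⁻ u in Set.Ioo (0:ℝ) 1,
          (ENNReal.ofReal (1 - t) * Mf u + ENNReal.ofReal t * Mg u) := by
        rw [lintegral_add_left ((hMfanti.measurable).const_mul _),
          lintegral_const_mul _ hMfanti.measurable, lintegral_const_mul _ hMganti.measurable]
    _ ≤ ∫⁻ u in Set.Ioo (0:ℝ) 1, Mh u := setLIntegral_mono hMhanti.measurable key
    _ ≤ ∫⁻ u in Set.Ioi (0:ℝ), Mh u :=
        lintegral_mono' (Measure.restrict_mono Set.Ioo_subset_Ioi_self le_rfl) le_rfl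
    _ = ∫⁻ z, h z := layh.symm

/-- One-dimensional Prékopa–Leindler inequality assuming finite suprema. -/
lemma dim1_core (t : ℝ) (ht : t ∈ Set.Ioo (0:ℝ) 1)
    (f g h : ℝ → ℝ≥0∞) (hf : Measurable f) (hg : Measurable g) (hh : Measurable h)
    (hfsup : (⨆ x, f x) ≠ ∞) (hgsup : (⨆ y, g y) ≠ ∞)
    (hc : ∀ x y, f x ^ (1 - t) * g y ^ t ≤ h ((1 - t) * x + t * y)) :
    (∫⁻ x, f x) ^ (1 - t) * (∫⁻ y, g y) ^ t ≤ ∫⁻ z, h z := by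
  obtain ⟨ht0, ht1⟩ := ht
  have h1t : (0:ℝ) < 1 - t := by linarith
  set Mf := ⨆ x, f x with hMf
  set Mg := ⨆ y, g y with hMg
  rcases eq_or_ne Mf 0 with hMf0 | hMf0
  · have : ∀ x, f x = 0 := fun x => le_antisymm (hMf0 ▸ le_iSup f x) (zero_le)
    rw [lintegral_congr this, lintegral_zero, ENNReal.zero_rpow_of_pos h1t, zero_mul]
    exact zero_le
  rcases eq_or_ne Mg 0 with hMg0 | hMg0
  · have : ∀ y, g y = 0 := fun y => le_antisymm (hMg0 ▸ le_iSup g y) (zero_le)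
    rw [lintegral_congr this, lintegral_zero, ENNReal.zero_rpow_of_pos ht0, mul_zero]
    exact zero_le
  -- normalize
  set c : ℝ≥0∞ := Mf ^ (1 - t) * Mg ^ t with hcdef
  have hMfrne0' : Mf ^ (1 - t) ≠ 0 := by
    rw [Ne, ENNReal.rpow_eq_zero_iff]
    rintro (⟨h1, -⟩ | ⟨-, h2⟩)
    · exact hMf0 h1
    · exact absurd h2 (not_lt.2 h1t.le)
  have hMgrne0' : Mg ^ t ≠ 0 := by
    rw [Ne, ENNReal.rpow_eq_zero_iff]
    rintro (⟨h1, -⟩ | ⟨-, h2⟩)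
    · exact hMg0 h1
    · exact absurd h2 (not_lt.2 ht0.le)
  have hcne0 : c ≠ 0 := by
    rw [hcdef]
    exact mul_ne_zero hMfrne0' hMgrne0'
  have hcnetop : c ≠ ∞ := by
    apply ENNReal.mul_ne_top
    · exact ENNReal.rpow_ne_top_of_nonneg h1t.le hfsup
    · exact ENNReal.rpow_ne_top_of_nonneg ht0.le hgsup
  set f' : ℝ → ℝ≥0∞ := fun x => Mf⁻¹ * f x with hf'def
  set g' : ℝ → ℝ≥0∞ := fun y => Mg⁻¹ * g y with hg'def
  set h' : ℝ → ℝ≥0∞ := fun z => c⁻¹ * min (h z) c with hh'def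
  have hf'm : Measurable f' := hf.const_mul _
  have hg'm : Measurable g' := hg.const_mul _
  have hh'm : Measurable h' := (hh.min measurable_const).const_mul _
  have hf'1 : ∀ x, f' x ≤ 1 := fun x => by
    rw [hf'def]
    calc Mf⁻¹ * f x ≤ Mf⁻¹ * Mf := mul_le_mul_right (le_iSup f x) _
      _ = 1 := ENNReal.inv_mul_cancel hMf0 hfsup
  have hg'1 : ∀ y, g' y ≤ 1 := fun y => by
    rw [hg'def]
    calc Mg⁻¹ * g y ≤ Mg⁻¹ * Mg := mul_le_mul_right (le_iSup g y) _
      _ = 1 := ENNReal.inv_mul_cancel hMg0 hgsup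
  have hh'1 : ∀ z, h' z ≤ 1 := fun z => by
    rw [hh'def]
    calc c⁻¹ * min (h z) c ≤ c⁻¹ * c := mul_le_mul_right (min_le_right _ _) _
      _ = 1 := ENNReal.inv_mul_cancel hcne0 hcnetop
  have hf's : (⨆ x, f' x) = 1 := by
    have e : (⨆ x, f' x) = Mf⁻¹ * ⨆ x, f x := by
      rw [hf'def]; exact (ENNReal.mul_iSup _ _).symm
    rw [e, ← hMf]
    exact ENNReal.inv_mul_cancel hMf0 hfsup
  have hg's : (⨆ y, g' y) = 1 := by
    have e : (⨆ y, g' y) = Mg⁻¹ * ⨆ y, g y := by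
      rw [hg'def]; exact (ENNReal.mul_iSup _ _).symm
    rw [e, ← hMg]
    exact ENNReal.inv_mul_cancel hMg0 hgsup
  have hMfrne0 : Mf ^ (1 - t) ≠ 0 := by
    rw [Ne, ENNReal.rpow_eq_zero_iff]
    rintro (⟨h1, -⟩ | ⟨-, h2⟩)
    · exact hMf0 h1
    · exact absurd h2 (not_lt.2 h1t.le)
  have hMgrne0 : Mg ^ t ≠ 0 := by
    rw [Ne, ENNReal.rpow_eq_zero_iff]
    rintro (⟨h1, -⟩ | ⟨-, h2⟩)
    · exact hMg0 h1
    · exact absurd h2 (not_lt.2 ht0.le)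
  have hinvc : (Mf⁻¹) ^ (1 - t) * (Mg⁻¹) ^ t = c⁻¹ := by
    rw [ENNReal.inv_rpow, ENNReal.inv_rpow, hcdef,
      ENNReal.mul_inv (Or.inl hMfrne0) (Or.inr hMgrne0)]
  -- transformed hypothesis
  have hc' : ∀ x y, f' x ^ (1 - t) * g' y ^ t ≤ h' ((1 - t) * x + t * y) := by
    intro x y
    have hLHS : f' x ^ (1 - t) * g' y ^ t
        = c⁻¹ * (f x ^ (1 - t) * g y ^ t) := by
      rw [hf'def, hg'def]
      simp only []
      rw [ENNReal.mul_rpow_of_nonneg _ _ h1t.le, ENNReal.mul_rpow_of_nonneg _ _ ht0.le,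
        mul_mul_mul_comm, hinvc]
    rw [hLHS, hh'def]
    show c⁻¹ * (f x ^ (1 - t) * g y ^ t)
      ≤ c⁻¹ * min (h ((1 - t) * x + t * y)) c
    rcases le_total (h ((1 - t) * x + t * y)) c with hle | hle
    · rw [min_eq_left hle]
      exact mul_le_mul_right (hc x y) _
    · rw [min_eq_right hle, ENNReal.inv_mul_cancel hcne0 hcnetop]
      calc c⁻¹ * (f x ^ (1 - t) * g y ^ t)
          ≤ c⁻¹ * (Mf ^ (1 - t) * Mg ^ t) := by
            refine mul_le_mul_right (mul_le_mul' ?_ ?_) _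
            · exact ENNReal.rpow_le_rpow (le_iSup f x) h1t.le
            · exact ENNReal.rpow_le_rpow (le_iSup g y) ht0.le
        _ = 1 := by rw [← hcdef]; exact ENNReal.inv_mul_cancel hcne0 hcnetop
  have hlin := dim1_linear t ⟨ht0, ht1⟩ f' g' h' hf'm hg'm hh'm hf'1 hg'1 hh'1 hf's hg's hc'
  have hgeom := geom_le_arith t ⟨ht0, ht1⟩ (∫⁻ x, f' x) (∫⁻ y, g' y)
  have main' : (∫⁻ x, f' x) ^ (1 - t) * (∫⁻ y, g' y) ^ t ≤ ∫⁻ z, h' z :=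
    hgeom.trans hlin
  -- undo the normalization
  have eIf : ∫⁻ x, f x = Mf * ∫⁻ x, f' x := by
    rw [hf'def, lintegral_const_mul _ hf, ← mul_assoc,
      ENNReal.mul_inv_cancel hMf0 hfsup, one_mul]
  have eIg : ∫⁻ y, g y = Mg * ∫⁻ y, g' y := by
    rw [hg'def, lintegral_const_mul _ hg, ← mul_assoc,
      ENNReal.mul_inv_cancel hMg0 hgsup, one_mul]
  have eIh : c * ∫⁻ z, h' z ≤ ∫⁻ z, h z := by
    rw [hh'def, lintegral_const_mul _ (hh.min measurable_const), ← mul_assoc,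
      ENNReal.mul_inv_cancel hcne0 hcnetop, one_mul]
    exact lintegral_mono fun z => min_le_left _ _
  calc (∫⁻ x, f x) ^ (1 - t) * (∫⁻ y, g y) ^ t
      = (Mf * ∫⁻ x, f' x) ^ (1 - t) * (Mg * ∫⁻ y, g' y) ^ t := by rw [eIf, eIg]
    _ = c * ((∫⁻ x, f' x) ^ (1 - t) * (∫⁻ y, g' y) ^ t) := by
        rw [ENNReal.mul_rpow_of_nonneg _ _ h1t.le, ENNReal.mul_rpow_of_nonneg _ _ ht0.le,
          hcdef, mul_mul_mul_comm]
    _ ≤ c * ∫⁻ z, h' z := mul_le_mul_right main' _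
    _ ≤ ∫⁻ z, h z := eIh

/-- The one-dimensional Prékopa–Leindler inequality. -/
lemma dim1 (t : ℝ) (ht : t ∈ Set.Ioo (0:ℝ) 1)
    (f g h : ℝ → ℝ≥0∞) (hf : Measurable f) (hg : Measurable g) (hh : Measurable h)
    (hc : ∀ x y, f x ^ (1 - t) * g y ^ t ≤ h ((1 - t) * x + t * y)) :
    (∫⁻ x, f x) ^ (1 - t) * (∫⁻ y, g y) ^ t ≤ ∫⁻ z, h z := by
  obtain ⟨ht0, ht1⟩ := ht
  have h1t : (0:ℝ) < 1 - t := by linarith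
  have trunc : ∀ n : ℕ,
      (∫⁻ x, min (f x) n) ^ (1 - t) * (∫⁻ y, min (g y) n) ^ t ≤ ∫⁻ z, h z := by
    intro n
    refine dim1_core t ⟨ht0, ht1⟩ _ _ h (hf.min measurable_const) (hg.min measurable_const)
      hh ?_ ?_ ?_
    · exact ne_top_of_le_ne_top (ENNReal.natCast_ne_top n)
        (iSup_le fun x => min_le_right _ _)
    · exact ne_top_of_le_ne_top (ENNReal.natCast_ne_top n)
        (iSup_le fun y => min_le_right _ _)
    · intro x y
      refine le_trans (mul_le_mul'
        (ENNReal.rpow_le_rpow (min_le_left _ _) h1t.le)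
        (ENNReal.rpow_le_rpow (min_le_left _ _) ht0.le)) (hc x y)
  have monoF : Monotone fun n : ℕ => fun x => min (f x) (n : ℝ≥0∞) := by
    intro n m hnm x
    exact min_le_min le_rfl (Nat.cast_le.2 hnm)
  have monoG : Monotone fun n : ℕ => fun y => min (g y) (n : ℝ≥0∞) := by
    intro n m hnm y
    exact min_le_min le_rfl (Nat.cast_le.2 hnm)
  have hAsup : (⨆ n : ℕ, ∫⁻ x, min (f x) n) = ∫⁻ x, f x := by
    rw [← lintegral_iSup (fun n => hf.min measurable_const) monoF]
    exact lintegral_congr fun x => iSup_min_natCast (f x)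
  have hBsup : (⨆ n : ℕ, ∫⁻ y, min (g y) n) = ∫⁻ y, g y := by
    rw [← lintegral_iSup (fun n => hg.min measurable_const) monoG]
    exact lintegral_congr fun y => iSup_min_natCast (g y)
  rcases eq_or_ne (∫⁻ x, f x) 0 with hA0 | hA0
  · rw [hA0, ENNReal.zero_rpow_of_pos h1t, zero_mul]
    exact zero_le
  rcases eq_or_ne (∫⁻ y, g y) 0 with hB0 | hB0
  · rw [hB0, ENNReal.zero_rpow_of_pos ht0, mul_zero]
    exact zero_le
  have monoA : Monotone fun n : ℕ => ∫⁻ x, min (f x) (n : ℝ≥0∞) :=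
    fun n m hnm => lintegral_mono (monoF hnm)
  have monoB : Monotone fun n : ℕ => ∫⁻ y, min (g y) (n : ℝ≥0∞) :=
    fun n m hnm => lintegral_mono (monoG hnm)
  have tendA : Filter.Tendsto (fun n : ℕ => ∫⁻ x, min (f x) n) Filter.atTop
      (nhds (∫⁻ x, f x)) := hAsup ▸ tendsto_atTop_iSup monoA
  have tendB : Filter.Tendsto (fun n : ℕ => ∫⁻ y, min (g y) n) Filter.atTop
      (nhds (∫⁻ y, g y)) := hBsup ▸ tendsto_atTop_iSup monoB
  have hAr : (∫⁻ x, f x) ^ (1 - t) ≠ 0 := by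
    rw [Ne, ENNReal.rpow_eq_zero_iff]
    rintro (⟨h1, -⟩ | ⟨-, h2⟩)
    · exact hA0 h1
    · exact absurd h2 (not_lt.2 h1t.le)
  have hBr : (∫⁻ y, g y) ^ t ≠ 0 := by
    rw [Ne, ENNReal.rpow_eq_zero_iff]
    rintro (⟨h1, -⟩ | ⟨-, h2⟩)
    · exact hB0 h1
    · exact absurd h2 (not_lt.2 ht0.le)
  have tendsto_prod : Filter.Tendsto
      (fun n : ℕ => (∫⁻ x, min (f x) n) ^ (1 - t) * (∫⁻ y, min (g y) n) ^ t)
      Filter.atTop (nhds ((∫⁻ x, f x) ^ (1 - t) * (∫⁻ y, g y) ^ t)) := by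
    refine ENNReal.Tendsto.mul
      ((ENNReal.continuous_rpow_const.tendsto _).comp tendA) (Or.inl hAr)
      ((ENNReal.continuous_rpow_const.tendsto _).comp tendB) (Or.inl hBr)
  exact le_of_tendsto tendsto_prod (Filter.Eventually.of_forall trunc)

lemma insertNth_affine {n : ℕ} (r s : ℝ) (a b : ℝ) (p q : Fin n → ℝ) :
    Fin.insertNth (α := fun _ => ℝ) 0 (r * a + s * b) (r • p + s • q)
      = r • Fin.insertNth (α := fun _ => ℝ) 0 a p + s • Fin.insertNth (α := fun _ => ℝ) 0 b q := by
  funext j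
  refine Fin.succAboveCases (0 : Fin (n+1)) ?_ ?_ j
  · simp [Fin.insertNth_apply_same]
  · intro i
    simp [Fin.insertNth_apply_succAbove]

/-- Prékopa–Leindler inequality for Lebesgue measure on `Fin n → ℝ`. -/
lemma pl_pi : ∀ (n : ℕ) (t : ℝ), t ∈ Set.Ioo (0:ℝ) 1 →
    ∀ f g h : (Fin n → ℝ) → ℝ≥0∞, Measurable f → Measurable g → Measurable h →
    (∀ x y, f x ^ (1 - t) * g y ^ t ≤ h ((1 - t) • x + t • y)) →
    (∫⁻ x, f x) ^ (1 - t) * (∫⁻ y, g y) ^ t ≤ ∫⁻ z, h z := by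
  intro n
  induction n with
  | zero =>
    intro t ht f g h hf hg hh hc
    have huniv : (volume : Measure (Fin 0 → ℝ)) Set.univ = 1 := by
      rw [volume_pi, Measure.pi_univ]
      simp
    rw [lintegral_unique, lintegral_unique, lintegral_unique, huniv, mul_one, mul_one, mul_one]
    have key := hc default default
    have hd : (1 - t) • (default : Fin 0 → ℝ) + t • (default : Fin 0 → ℝ) = default :=
      Subsingleton.elim _ _
    rw [hd] at key
    have edef : (@default (Fin 0 → ℝ) Unique.instInhabited)
        = (@default (Fin 0 → ℝ) Pi.instInhabited) := Subsingleton.elim _ _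
    rw [edef]
    exact key
  | succ n ih =>
    intro t ht f g h hf hg hh hc
    obtain ⟨ht0, ht1⟩ := ht
    set e := MeasurableEquiv.piFinSuccAbove (fun _ : Fin (n+1) => ℝ) 0 with hedef
    have mp : MeasurePreserving (⇑e.symm)
        ((volume : Measure ℝ).prod (volume : Measure (Fin n → ℝ)))
        (volume : Measure (Fin (n+1) → ℝ)) :=
      (measurePreserving_piFinSuccAbove (fun _ : Fin (n+1) => (volume : Measure ℝ)) 0).symm e
    have hsymm : ∀ (a : ℝ) (p : Fin n → ℝ),
        e.symm (a, p) = Fin.insertNth (α := fun _ => ℝ) 0 a p := fun a p => rfl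
    have hsymm_affine : ∀ (a b : ℝ) (p q : Fin n → ℝ),
        e.symm ((1 - t) * a + t * b, (1 - t) • p + t • q)
          = (1 - t) • e.symm (a, p) + t • e.symm (b, q) := by
      intro a b p q
      rw [hsymm, hsymm, hsymm, insertNth_affine]
    set f' : ℝ × (Fin n → ℝ) → ℝ≥0∞ := fun p => f (e.symm p) with hf'def
    set g' : ℝ × (Fin n → ℝ) → ℝ≥0∞ := fun p => g (e.symm p) with hg'def
    set h' : ℝ × (Fin n → ℝ) → ℝ≥0∞ := fun p => h (e.symm p) with hh'def
    have hf'm : Measurable f' := hf.comp e.symm.measurable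
    have hg'm : Measurable g' := hg.comp e.symm.measurable
    have hh'm : Measurable h' := hh.comp e.symm.measurable
    set F : ℝ → ℝ≥0∞ := fun a => ∫⁻ p, f' (a, p) with hFdef
    set G : ℝ → ℝ≥0∞ := fun b => ∫⁻ q, g' (b, q) with hGdef
    set H : ℝ → ℝ≥0∞ := fun c => ∫⁻ z, h' (c, z) with hHdef
    have hFm : Measurable F :=
      Measurable.lintegral_prod_right (f := fun a p => f' (a, p)) hf'm
    have hGm : Measurable G :=
      Measurable.lintegral_prod_right (f := fun b q => g' (b, q)) hg'm
    have hHm : Measurable H :=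
      Measurable.lintegral_prod_right (f := fun c z => h' (c, z)) hh'm
    have hFGH : ∀ a b : ℝ, F a ^ (1 - t) * G b ^ t ≤ H ((1 - t) * a + t * b) := by
      intro a b
      refine ih t ⟨ht0, ht1⟩ (fun p => f' (a, p)) (fun q => g' (b, q))
        (fun z => h' ((1 - t) * a + t * b, z))
        (hf'm.comp measurable_prodMk_left) (hg'm.comp measurable_prodMk_left)
        (hh'm.comp measurable_prodMk_left) ?_
      intro x y
      have key := hc (e.symm (a, x)) (e.symm (b, y))
      rw [← hsymm_affine a b x y] at key
      exact key
    have main := dim1 t ⟨ht0, ht1⟩ F G H hFm hGm hHm hFGH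
    have ef : ∫⁻ a, F a = ∫⁻ z, f z := by
      rw [hFdef]
      simp only []
      rw [← lintegral_prod _ hf'm.aemeasurable]
      exact mp.lintegral_comp hf
    have eg : ∫⁻ b, G b = ∫⁻ z, g z := by
      rw [hGdef]
      simp only []
      rw [← lintegral_prod _ hg'm.aemeasurable]
      exact mp.lintegral_comp hg
    have eh : ∫⁻ c, H c = ∫⁻ z, h z := by
      rw [hHdef]
      simp only []
      rw [← lintegral_prod _ hh'm.aemeasurable]
      exact mp.lintegral_comp hh
    rw [ef, eg, eh] at main
    exact main

end PrekopaLeindlerAux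

open PrekopaLeindlerAux

/-- The Prékopa–Leindler inequality for a measure with a log-concave density: if
`φ((1-t)x + ty) ≥ φ(x)^{1-t} φ(y)^t` and `u((1-t)x + ty) ≥ v(x)^{1-t} w(y)^t`, then
`∫ u dμ ≥ (∫ v dμ)^{1-t} (∫ w dμ)^t` where `μ = φ dx`. -/
theorem lintegral_prekopaLeindler_logConcave (d : ℕ) (t : ℝ) (ht : t ∈ Set.Ioo (0:ℝ) 1)
    (φ : EuclideanSpace ℝ (Fin d) → ℝ≥0) (hφ : Measurable φ)
    (hφconc : ∀ x y : EuclideanSpace ℝ (Fin d),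
      φ x ^ (1 - t) * φ y ^ t ≤ φ ((1 - t) • x + t • y))
    (u v w : EuclideanSpace ℝ (Fin d) → ℝ≥0)
    (hu : Measurable u) (hv : Measurable v) (hw : Measurable w)
    (hcond : ∀ x y : EuclideanSpace ℝ (Fin d),
      v x ^ (1 - t) * w y ^ t ≤ u ((1 - t) • x + t • y)) :
    (∫⁻ x, (v x : ℝ≥0∞) ∂(volume.withDensity fun x => (φ x : ℝ≥0∞))) ^ (1 - t)
        * (∫⁻ y, (w y : ℝ≥0∞) ∂(volume.withDensity fun x => (φ x : ℝ≥0∞))) ^ t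
      ≤ ∫⁻ z, (u z : ℝ≥0∞) ∂(volume.withDensity fun x => (φ x : ℝ≥0∞)) := by
  obtain ⟨ht0, ht1⟩ := ht
  have h1t : (0:ℝ) < 1 - t := by linarith
  have hφE : Measurable fun x => (φ x : ℝ≥0∞) := hφ.coe_nnreal_ennreal
  have hrw : ∀ (k : EuclideanSpace ℝ (Fin d) → ℝ≥0), Measurable k →
      ∫⁻ x, (k x : ℝ≥0∞) ∂(volume.withDensity fun x => (φ x : ℝ≥0∞))
        = ∫⁻ x, ((φ x : ℝ≥0∞) * (k x : ℝ≥0∞)) := by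
    intro k hk
    rw [lintegral_withDensity_eq_lintegral_mul _ hφE hk.coe_nnreal_ennreal]
    rfl
  rw [hrw v hv, hrw w hw, hrw u hu]
  -- the pointwise hypothesis for the products
  have keyNN : ∀ a b : EuclideanSpace ℝ (Fin d),
      ((φ a : ℝ≥0∞) * (v a : ℝ≥0∞)) ^ (1 - t) * ((φ b : ℝ≥0∞) * (w b : ℝ≥0∞)) ^ t
        ≤ (φ ((1 - t) • a + t • b) : ℝ≥0∞) * (u ((1 - t) • a + t • b) : ℝ≥0∞) := by
    intro a b
    have h3 : (φ a ^ (1 - t) * φ b ^ t) * (v a ^ (1 - t) * w b ^ t)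
        ≤ φ ((1 - t) • a + t • b) * u ((1 - t) • a + t • b) :=
      mul_le_mul' (hφconc a b) (hcond a b)
    calc ((φ a : ℝ≥0∞) * (v a : ℝ≥0∞)) ^ (1 - t) * ((φ b : ℝ≥0∞) * (w b : ℝ≥0∞)) ^ t
        = ((φ a : ℝ≥0∞) ^ (1 - t) * (φ b : ℝ≥0∞) ^ t)
            * ((v a : ℝ≥0∞) ^ (1 - t) * (w b : ℝ≥0∞) ^ t) := by
          rw [ENNReal.mul_rpow_of_nonneg _ _ h1t.le, ENNReal.mul_rpow_of_nonneg _ _ ht0.le]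
          ring
      _ = (((φ a ^ (1 - t) * φ b ^ t) * (v a ^ (1 - t) * w b ^ t) : ℝ≥0) : ℝ≥0∞) := by
          rw [← ENNReal.coe_rpow_of_nonneg (φ a) h1t.le,
            ← ENNReal.coe_rpow_of_nonneg (φ b) ht0.le,
            ← ENNReal.coe_rpow_of_nonneg (v a) h1t.le,
            ← ENNReal.coe_rpow_of_nonneg (w b) ht0.le,
            ← ENNReal.coe_mul, ← ENNReal.coe_mul, ← ENNReal.coe_mul]
      _ ≤ ((φ ((1 - t) • a + t • b) * u ((1 - t) • a + t • b) : ℝ≥0) : ℝ≥0∞) :=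
          ENNReal.coe_le_coe.2 h3
      _ = (φ ((1 - t) • a + t • b) : ℝ≥0∞) * (u ((1 - t) • a + t • b) : ℝ≥0∞) :=
          ENNReal.coe_mul _ _
  -- transfer to the pi space
  set es := (MeasurableEquiv.toLp 2 (Fin d → ℝ)).symm with hesdef
  have hmp : MeasurePreserving (⇑es.symm) volume volume :=
    (EuclideanSpace.volume_preserving_symm_measurableEquiv_toLp (Fin d)).symm es
  have haff : ∀ x y : Fin d → ℝ,
      es.symm ((1 - t) • x + t • y) = (1 - t) • es.symm x + t • es.symm y := by
    intro x y
    rfl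
  set F : (Fin d → ℝ) → ℝ≥0∞ := fun x => (φ (es.symm x) : ℝ≥0∞) * (v (es.symm x) : ℝ≥0∞)
    with hFdef
  set G : (Fin d → ℝ) → ℝ≥0∞ := fun y => (φ (es.symm y) : ℝ≥0∞) * (w (es.symm y) : ℝ≥0∞)
    with hGdef
  set H : (Fin d → ℝ) → ℝ≥0∞ := fun z => (φ (es.symm z) : ℝ≥0∞) * (u (es.symm z) : ℝ≥0∞)
    with hHdef
  have hFm : Measurable F :=
    ((hφ.comp es.symm.measurable).coe_nnreal_ennreal).mul
      ((hv.comp es.symm.measurable).coe_nnreal_ennreal)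
  have hGm : Measurable G :=
    ((hφ.comp es.symm.measurable).coe_nnreal_ennreal).mul
      ((hw.comp es.symm.measurable).coe_nnreal_ennreal)
  have hHm : Measurable H :=
    ((hφ.comp es.symm.measurable).coe_nnreal_ennreal).mul
      ((hu.comp es.symm.measurable).coe_nnreal_ennreal)
  have hcondF : ∀ x y : Fin d → ℝ, F x ^ (1 - t) * G y ^ t ≤ H ((1 - t) • x + t • y) := by
    intro x y
    have := keyNN (es.symm x) (es.symm y)
    rw [hFdef, hGdef, hHdef]
    simp only []
    rw [haff x y]
    exact this
  have main := pl_pi d t ⟨ht0, ht1⟩ F G H hFm hGm hHm hcondF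
  have eF : ∫⁻ x, F x = ∫⁻ x, ((φ x : ℝ≥0∞) * (v x : ℝ≥0∞)) :=
    hmp.lintegral_comp (hφE.mul hv.coe_nnreal_ennreal)
  have eG : ∫⁻ y, G y = ∫⁻ y, ((φ y : ℝ≥0∞) * (w y : ℝ≥0∞)) :=
    hmp.lintegral_comp (hφE.mul hw.coe_nnreal_ennreal)
  have eH : ∫⁻ z, H z = ∫⁻ z, ((φ z : ℝ≥0∞) * (u z : ℝ≥0∞)) :=
    hmp.lintegral_comp (hφE.mul hu.coe_nnreal_ennreal)
  rw [eF, eG, eH] at main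
  exact main
end
end

section
/- Let t ∈ (0,1) and let μ be a strongly log-concave measure on ℝ^d. If non-negative Borel functions u, v, w : ℝ^d → [0,∞) satisfy u((1−t)x + ty) ≥ e^{−t(1−t)|x−y|²/2} v(x)^{1−t} w(y)^{t} for all x, y ∈ ℝ^d, then ∫ u dμ ≥ (∫ v dμ)^{1−t} (∫ w dμ)^{t}. -/
open MeasureTheory Set Pointwise
open scoped ENNReal NNReal

noncomputable section

lemma sumset_compact {K L : Set ℝ} (hK : IsCompact K) (hL : IsCompact L)
    (hKne : K.Nonempty) (hLne : L.Nonempty) :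
    volume K + volume L ≤ volume (K + L) := by
  set a := sSup K with ha
  set b := sInf L with hb
  have haK : a ∈ K := hK.sSup_mem hKne
  have hbL : b ∈ L := hL.sInf_mem hLne
  have hsub : (b +ᵥ K) ∪ (a +ᵥ L) ⊆ K + L := by
    rintro z (⟨k, hk, rfl⟩ | ⟨l, hl, rfl⟩)
    · exact ⟨k, hk, b, hbL, add_comm k b⟩
    · exact ⟨a, haK, l, hl, rfl⟩
  have hinter : (b +ᵥ K) ∩ (a +ᵥ L) ⊆ {a + b} := by
    rintro z ⟨⟨k, hk, rfl⟩, ⟨l, hl, hl'⟩⟩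
    have h1 : k ≤ a := le_csSup hK.bddAbove hk
    have h2 : b ≤ l := csInf_le hL.bddBelow hl
    simp only [vadd_eq_add] at hl'
    have : b + k = a + b := le_antisymm (by linarith) (by linarith)
    simp [this, add_comm a b]
  calc volume K + volume L = volume (b +ᵥ K) + volume (a +ᵥ L) := by
        rw [measure_vadd, measure_vadd]
    _ = volume ((b +ᵥ K) ∪ (a +ᵥ L)) + volume ((b +ᵥ K) ∩ (a +ᵥ L)) :=
        (measure_union_add_inter _ (hL.measurableSet.const_vadd a)).symm
    _ ≤ volume (K + L) + volume {a + b} :=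
        add_le_add (measure_mono hsub) (measure_mono hinter)
    _ = volume (K + L) := by simp

lemma sumset_meas {A B : Set ℝ} (hA : MeasurableSet A) (hB : MeasurableSet B)
    (hAne : A.Nonempty) (hBne : B.Nonempty) :
    volume A + volume B ≤ volume (A + B) := by
  obtain ⟨a, haA⟩ := hAne
  obtain ⟨b, hbB⟩ := hBne
  have hAle : volume A ≤ volume (A + B) := by
    calc volume A = volume (b +ᵥ A) := (measure_vadd _ _ _).symm
      _ ≤ volume (A + B) := measure_mono (by rintro z ⟨x, hx, rfl⟩; exact ⟨x, hx, b, hbB, add_comm x b⟩)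
  have hBle : volume B ≤ volume (A + B) := by
    calc volume B = volume (a +ᵥ B) := (measure_vadd _ _ _).symm
      _ ≤ volume (A + B) := measure_mono (by rintro z ⟨y, hy, rfl⟩; exact ⟨a, haA, y, hy, rfl⟩)
  rcases eq_or_ne (volume A) 0 with h0 | hA0
  · simpa [h0] using hBle
  rcases eq_or_ne (volume B) 0 with h0 | hB0
  · simpa [h0] using hAle
  rcases eq_or_ne (volume A) ⊤ with htop | hAt
  · have : volume (A + B) = ⊤ := top_le_iff.mp (htop ▸ hAle)
    simp [this]
  rcases eq_or_ne (volume B) ⊤ with htop | hBt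
  · have : volume (A + B) = ⊤ := top_le_iff.mp (htop ▸ hBle)
    simp [this]
  refine ENNReal.le_of_forall_pos_le_add fun ε hε hfin => ?_
  have hε2 : (ε : ℝ≥0∞) / 2 ≠ 0 := by
    simp [ENNReal.div_eq_zero_iff, ENNReal.coe_eq_zero, hε.ne']
  obtain ⟨K, hKA, hKc, hKlt⟩ := hA.exists_isCompact_lt_add hAt hε2
  obtain ⟨L, hLB, hLc, hLlt⟩ := hB.exists_isCompact_lt_add hBt hε2
  set K' := K ∪ {a}
  set L' := L ∪ {b}
  have hK'c : IsCompact K' := hKc.union isCompact_singleton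
  have hL'c : IsCompact L' := hLc.union isCompact_singleton
  have hK'A : K' ⊆ A := union_subset hKA (by simpa using haA)
  have hL'B : L' ⊆ B := union_subset hLB (by simpa using hbB)
  calc volume A + volume B ≤ (volume K' + ε/2) + (volume L' + ε/2) := by
        refine add_le_add ?_ ?_
        · exact (hKlt.le.trans (add_le_add_left (measure_mono subset_union_left) _))
        · exact (hLlt.le.trans (add_le_add_left (measure_mono subset_union_left) _))
    _ = (volume K' + volume L') + ε := by
        rw [add_add_add_comm, ENNReal.add_halves]
    _ ≤ volume (K' + L') + ε := by
        exact add_le_add_left (sumset_compact hK'c hL'c ⟨a, by simp [K']⟩ ⟨b, by simp [L']⟩) _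
    _ ≤ volume (A + B) + ε := add_le_add_left (measure_mono (add_subset_add hK'A hL'B)) _

lemma ennreal_amgm {t : ℝ} (ht0 : 0 < t) (ht1 : t < 1) (a b : ℝ≥0∞) :
    a ^ (1 - t) * b ^ t ≤ ENNReal.ofReal (1 - t) * a + ENNReal.ofReal t * b := by
  have h1t : (0:ℝ) < 1 - t := by linarith
  rcases eq_or_ne a ⊤ with rfl | ha
  · rcases eq_or_ne b 0 with rfl | hb
    · simp [ENNReal.zero_rpow_of_pos ht0]
    · have : ENNReal.ofReal (1 - t) * ⊤ = ⊤ := by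
        simp [ENNReal.mul_top, (ENNReal.ofReal_pos.mpr h1t).ne']
      simp [this]
  rcases eq_or_ne b ⊤ with rfl | hb
  · rcases eq_or_ne a 0 with rfl | ha0
    · simp [ENNReal.zero_rpow_of_pos h1t]
    · have : ENNReal.ofReal t * ⊤ = ⊤ := by
        simp [ENNReal.mul_top, (ENNReal.ofReal_pos.mpr ht0).ne']
      simp [this]
  lift a to ℝ≥0 using ha
  lift b to ℝ≥0 using hb
  have key := NNReal.geom_mean_le_arith_mean2_weighted (w₁ := (1 - t).toNNReal)
    (w₂ := t.toNNReal) (p₁ := a) (p₂ := b) ?_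
  · calc (a:ℝ≥0∞) ^ (1-t) * (b:ℝ≥0∞) ^ t
        = ((a ^ ((1-t).toNNReal : ℝ) * b ^ ((t.toNNReal : ℝ)) : ℝ≥0) : ℝ≥0∞) := by
          rw [Real.coe_toNNReal _ h1t.le, Real.coe_toNNReal _ ht0.le,
            ENNReal.coe_mul, ENNReal.coe_rpow_of_nonneg _ h1t.le,
            ENNReal.coe_rpow_of_nonneg _ ht0.le]
      _ ≤ (((1-t).toNNReal * a + t.toNNReal * b : ℝ≥0) : ℝ≥0∞) := by
          exact_mod_cast ENNReal.coe_le_coe.mpr key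
      _ = ENNReal.ofReal (1 - t) * a + ENNReal.ofReal t * b := by
          push_cast
          rfl
  · have : ((1 - t).toNNReal : ℝ) + (t.toNNReal : ℝ) = 1 := by
      rw [Real.coe_toNNReal _ h1t.le, Real.coe_toNNReal _ ht0.le]; ring
    exact_mod_cast this

-- pointwise level-set inequality
lemma level_ineq {t : ℝ} (ht0 : 0 < t) (ht1 : t < 1)
    {f g h : ℝ → ℝ≥0∞} (hf : Measurable f) (hg : Measurable g)
    (hfs : ∀ s : ℝ≥0∞, s < 1 → ∃ x, s < f x) (hgs : ∀ s : ℝ≥0∞, s < 1 → ∃ x, s < g x)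
    (hcond : ∀ x y, f x ^ (1 - t) * g y ^ t ≤ h ((1 - t) • x + t • y))
    {s : ℝ} (hs : s ∈ Set.Ioo (0:ℝ) 1) :
    ENNReal.ofReal (1 - t) * volume {x | ENNReal.ofReal s < f x}
      + ENNReal.ofReal t * volume {x | ENNReal.ofReal s < g x}
      ≤ volume {z | ENNReal.ofReal s ≤ h z} := by
  have h1t : (0:ℝ) < 1 - t := by linarith
  set σ := ENNReal.ofReal s with hσ
  have hσ0 : σ ≠ 0 := (ENNReal.ofReal_pos.mpr hs.1).ne'
  have hσtop : σ ≠ ⊤ := ENNReal.ofReal_ne_top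
  have hσ1 : σ < 1 := ENNReal.ofReal_lt_one.mpr hs.2
  set A := {x | σ < f x} with hA
  set B := {x | σ < g x} with hB
  have hAm : MeasurableSet A := hf measurableSet_Ioi
  have hBm : MeasurableSet B := hg measurableSet_Ioi
  have hAne : A.Nonempty := hfs σ hσ1
  have hBne : B.Nonempty := hgs σ hσ1
  have hsub : (1 - t) • A + t • B ⊆ {z | σ ≤ h z} := by
    rintro z ⟨x', ⟨x, hx, rfl⟩, y', ⟨y, hy, rfl⟩, rfl⟩
    have : σ ≤ f x ^ (1 - t) * g y ^ t := by
      calc σ = σ ^ ((1 - t) + t) := by rw [sub_add_cancel, ENNReal.rpow_one]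
        _ = σ ^ (1 - t) * σ ^ t := ENNReal.rpow_add _ _ hσ0 hσtop
        _ ≤ f x ^ (1 - t) * g y ^ t :=
            mul_le_mul' (ENNReal.rpow_le_rpow hx.le h1t.le) (ENNReal.rpow_le_rpow hy.le ht0.le)
    exact this.trans (hcond x y)
  have hsmulA : volume ((1 - t) • A) = ENNReal.ofReal (1 - t) * volume A := by
    rw [Measure.addHaar_smul_of_nonneg volume h1t.le A]
    simp
  have hsmulB : volume (t • B) = ENNReal.ofReal t * volume B := by
    rw [Measure.addHaar_smul_of_nonneg volume ht0.le B]
    simp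
  calc ENNReal.ofReal (1 - t) * volume A + ENNReal.ofReal t * volume B
      = volume ((1 - t) • A) + volume (t • B) := by rw [hsmulA, hsmulB]
    _ ≤ volume ((1 - t) • A + t • B) :=
        sumset_meas (hAm.const_smul_of_ne_zero (ne_of_gt h1t)) (hBm.const_smul_of_ne_zero (ne_of_gt ht0))
          (hAne.smul_set) (hBne.smul_set)
    _ ≤ volume {z | σ ≤ h z} := measure_mono hsub

/-- Layer cake for an ENNReal function bounded by 1, strict-inequality version. -/
lemma layercake_lt {f : ℝ → ℝ≥0∞} (hf : Measurable f) (hf1 : ∀ x, f x ≤ 1) :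
    ∫⁻ x, f x = ∫⁻ s in Set.Ioi (0:ℝ), volume {x | ENNReal.ofReal s < f x} := by
  have hft : ∀ x, f x ≠ ⊤ := fun x => (lt_of_le_of_lt (hf1 x) (by simp)).ne
  have h1 : ∫⁻ x, f x = ∫⁻ x, ENNReal.ofReal ((f x).toReal) := by
    apply lintegral_congr; intro x; rw [ENNReal.ofReal_toReal (hft x)]
  rw [h1, lintegral_eq_lintegral_meas_lt volume
    (Filter.Eventually.of_forall fun x => ENNReal.toReal_nonneg) hf.ennreal_toReal.aemeasurable]
  apply setLIntegral_congr_fun measurableSet_Ioi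
  intro s hs
  beta_reduce
  congr 1
  ext x
  simp only [mem_setOf_eq]
  rw [← ENNReal.ofReal_lt_iff_lt_toReal (le_of_lt hs) (hft x)]

/-- Layer cake, non-strict version. -/
lemma layercake_le {f : ℝ → ℝ≥0∞} (hf : Measurable f) (hf1 : ∀ x, f x ≤ 1) :
    ∫⁻ x, f x = ∫⁻ s in Set.Ioi (0:ℝ), volume {x | ENNReal.ofReal s ≤ f x} := by
  have hft : ∀ x, f x ≠ ⊤ := fun x => (lt_of_le_of_lt (hf1 x) (by simp)).ne
  have h1 : ∫⁻ x, f x = ∫⁻ x, ENNReal.ofReal ((f x).toReal) := by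
    apply lintegral_congr; intro x; rw [ENNReal.ofReal_toReal (hft x)]
  rw [h1, lintegral_eq_lintegral_meas_le volume
    (Filter.Eventually.of_forall fun x => ENNReal.toReal_nonneg) hf.ennreal_toReal.aemeasurable]
  apply setLIntegral_congr_fun measurableSet_Ioi
  intro s hs
  beta_reduce
  congr 1
  ext x
  simp only [mem_setOf_eq]
  rw [ENNReal.ofReal_le_iff_le_toReal (hft x)]

lemma pl_core {t : ℝ} (ht0 : 0 < t) (ht1 : t < 1)
    {f g h : ℝ → ℝ≥0∞} (hf : Measurable f) (hg : Measurable g) (hh : Measurable h)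
    (hf1 : ∀ x, f x ≤ 1) (hg1 : ∀ x, g x ≤ 1)
    (hfs : ∀ s : ℝ≥0∞, s < 1 → ∃ x, s < f x) (hgs : ∀ s : ℝ≥0∞, s < 1 → ∃ x, s < g x)
    (hcond : ∀ x y, f x ^ (1 - t) * g y ^ t ≤ h ((1 - t) • x + t • y)) :
    ENNReal.ofReal (1 - t) * (∫⁻ x, f x) + ENNReal.ofReal t * (∫⁻ y, g y) ≤ ∫⁻ z, h z := by
  set F := fun s : ℝ => volume {x | ENNReal.ofReal s < f x} with hF
  set G := fun s : ℝ => volume {x | ENNReal.ofReal s < g x} with hG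
  set H := fun s : ℝ => volume {z | ENNReal.ofReal s ≤ h z} with hH
  have hFanti : Antitone F := fun s s' hss =>
    measure_mono fun x hx => lt_of_le_of_lt (ENNReal.ofReal_le_ofReal hss) hx
  have hGanti : Antitone G := fun s s' hss =>
    measure_mono fun x hx => lt_of_le_of_lt (ENNReal.ofReal_le_ofReal hss) hx
  have hFm : Measurable F := hFanti.measurable
  have hGm : Measurable G := hGanti.measurable
  have hIoi : Set.Ioo (0:ℝ) 1 ∪ Set.Ici 1 = Set.Ioi 0 := by
    ext s; simp only [mem_union, mem_Ioo, mem_Ici, mem_Ioi]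
    constructor
    · rintro (⟨h1, _⟩ | h1) <;> [exact h1; linarith]
    · intro h1; rcases lt_or_ge s 1 with h2 | h2 <;> [exact Or.inl ⟨h1, h2⟩; exact Or.inr h2]
  have hdisj : Disjoint (Set.Ioo (0:ℝ) 1) (Set.Ici 1) := by
    rw [Set.disjoint_left]; rintro s ⟨_, h2⟩ h3; exact absurd h3 (not_le.mpr h2)
  have hzeroF : ∀ φ : ℝ → ℝ≥0∞, (∀ x, φ x ≤ 1) →
      ∫⁻ s in Set.Ici (1:ℝ), volume {x | ENNReal.ofReal s < φ x} = 0 := by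
    intro φ hφ1
    rw [setLIntegral_congr_fun measurableSet_Ici
      (fun s (hs : 1 ≤ s) => ?_), lintegral_zero]
    have : {x | ENNReal.ofReal s < φ x} = ∅ := by
      ext x; simp only [mem_setOf_eq, mem_empty_iff_false, iff_false, not_lt]
      exact (hφ1 x).trans (ENNReal.one_le_ofReal.mpr hs)
    rw [this]; exact measure_empty
  have hfint : ∫⁻ x, f x = ∫⁻ s in Set.Ioo (0:ℝ) 1, F s := by
    rw [layercake_lt hf hf1, ← hIoi, lintegral_union measurableSet_Ici hdisj,
      hzeroF f hf1, add_zero]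
  have hgint : ∫⁻ x, g x = ∫⁻ s in Set.Ioo (0:ℝ) 1, G s := by
    rw [layercake_lt hg hg1, ← hIoi, lintegral_union measurableSet_Ici hdisj,
      hzeroF g hg1, add_zero]
  have hhint : ∫⁻ s in Set.Ioo (0:ℝ) 1, H s ≤ ∫⁻ z, h z := by
    have hmin : Measurable fun z => min (h z) 1 := hh.min measurable_const
    have h1 : ∫⁻ s in Set.Ioo (0:ℝ) 1, H s
        = ∫⁻ s in Set.Ioo (0:ℝ) 1, volume {z | ENNReal.ofReal s ≤ min (h z) 1} := by
      apply setLIntegral_congr_fun measurableSet_Ioo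
      intro s hs
      have hset : {z | ENNReal.ofReal s ≤ h z} = {z | ENNReal.ofReal s ≤ min (h z) 1} := by
        ext z
        simp only [mem_setOf_eq, le_min_iff]
        exact ⟨fun hz => ⟨hz, (ENNReal.ofReal_le_one.mpr hs.2.le)⟩, fun hz => hz.1⟩
      simp only [hH]
      rw [hset]
    rw [h1]
    calc ∫⁻ s in Set.Ioo (0:ℝ) 1, volume {z | ENNReal.ofReal s ≤ min (h z) 1}
        ≤ ∫⁻ s in Set.Ioi (0:ℝ), volume {z | ENNReal.ofReal s ≤ min (h z) 1} :=
          lintegral_mono_set Ioo_subset_Ioi_self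
      _ = ∫⁻ z, min (h z) 1 := (layercake_le hmin fun z => min_le_right _ _).symm
      _ ≤ ∫⁻ z, h z := lintegral_mono fun z => min_le_left _ _
  calc ENNReal.ofReal (1 - t) * (∫⁻ x, f x) + ENNReal.ofReal t * (∫⁻ y, g y)
      = ∫⁻ s in Set.Ioo (0:ℝ) 1, (ENNReal.ofReal (1 - t) * F s + ENNReal.ofReal t * G s) := by
        rw [hfint, hgint, ← lintegral_const_mul _ hFm, ← lintegral_const_mul _ hGm,
          ← lintegral_add_left (hFm.const_mul _)]
    _ ≤ ∫⁻ s in Set.Ioo (0:ℝ) 1, H s := by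
        apply lintegral_mono_ae
        rw [ae_restrict_iff' measurableSet_Ioo]
        filter_upwards with s hs
        exact level_ineq ht0 ht1 hf hg hfs hgs hcond hs
    _ ≤ ∫⁻ z, h z := hhint

lemma iSup_rpow_mono {p : ℝ} (hp : 0 < p) (a : ℕ → ℝ≥0∞) :
    (⨆ n, a n) ^ p = ⨆ n, (a n) ^ p := by
  have := OrderIso.map_iSup (ENNReal.orderIsoRpow p hp) a
  simpa only [ENNReal.orderIsoRpow_apply] using this

/-- bounded case of 1-dimensional Prékopa-Leindler -/
lemma pl_dim_one_bounded {t : ℝ} (ht0 : 0 < t) (ht1 : t < 1)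
    {f g h : ℝ → ℝ≥0∞} (hf : Measurable f) (hg : Measurable g) (hh : Measurable h)
    (hM : (⨆ x, f x) ≠ ⊤) (hN : (⨆ y, g y) ≠ ⊤)
    (hcond : ∀ x y, f x ^ (1 - t) * g y ^ t ≤ h ((1 - t) • x + t • y)) :
    (∫⁻ x, f x) ^ (1 - t) * (∫⁻ y, g y) ^ t ≤ ∫⁻ z, h z := by
  have h1t : (0:ℝ) < 1 - t := by linarith
  set M := ⨆ x, f x with hMdef
  set N := ⨆ y, g y with hNdef
  rcases eq_or_ne M 0 with hM0 | hM0
  · have : ∀ x, f x = 0 := fun x => le_antisymm (hM0 ▸ le_iSup f x) zero_le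
    have hint : ∫⁻ x, f x = 0 := by simp [this]
    rw [hint, ENNReal.zero_rpow_of_pos h1t, zero_mul]
    exact zero_le
  rcases eq_or_ne N 0 with hN0 | hN0
  · have : ∀ y, g y = 0 := fun y => le_antisymm (hN0 ▸ le_iSup g y) zero_le
    have hint : ∫⁻ y, g y = 0 := by simp [this]
    rw [hint, ENNReal.zero_rpow_of_pos ht0, mul_zero]
    exact zero_le
  set c := M ^ (1 - t) * N ^ t with hcdef
  have hMp : M ^ (1 - t) ≠ 0 := (ENNReal.rpow_pos (pos_iff_ne_zero.mpr hM0) hM).ne'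
  have hNp : N ^ t ≠ 0 := (ENNReal.rpow_pos (pos_iff_ne_zero.mpr hN0) hN).ne'
  have hMt : M ^ (1 - t) ≠ ⊤ := ENNReal.rpow_ne_top_of_nonneg h1t.le hM
  have hNt : N ^ t ≠ ⊤ := ENNReal.rpow_ne_top_of_nonneg ht0.le hN
  have hc0 : c ≠ 0 := mul_ne_zero hMp hNp
  have hct : c ≠ ⊤ := ENNReal.mul_ne_top hMt hNt
  set f' := fun x => f x / M with hf'def
  set g' := fun y => g y / N with hg'def
  set h' := fun z => h z / c with hh'def
  have hdivmul : ∀ (a b : ℝ≥0∞), a / M ^ (1-t) * (b / N ^ t) = a * b / c := by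
    intro a b
    rw [hcdef, div_eq_mul_inv, div_eq_mul_inv, div_eq_mul_inv,
      ENNReal.mul_inv (Or.inl hMp) (Or.inl hMt)]
    ring
  have hcond' : ∀ x y, f' x ^ (1 - t) * g' y ^ t ≤ h' ((1 - t) • x + t • y) := by
    intro x y
    rw [hf'def, hg'def, hh'def]
    simp only
    rw [ENNReal.div_rpow_of_nonneg _ _ h1t.le, ENNReal.div_rpow_of_nonneg _ _ ht0.le,
      hdivmul]
    exact ENNReal.div_le_div_right (hcond x y) c
  have hf'1 : ∀ x, f' x ≤ 1 := fun x => ENNReal.div_le_of_le_mul (by rw [one_mul]; exact le_iSup f x)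
  have hg'1 : ∀ y, g' y ≤ 1 := fun y => ENNReal.div_le_of_le_mul (by rw [one_mul]; exact le_iSup g y)
  have hf's : ∀ s : ℝ≥0∞, s < 1 → ∃ x, s < f' x := by
    intro s hs
    have h1 : s * M < M := by
      calc s * M < 1 * M := ENNReal.mul_lt_mul_left hM0 hM hs
        _ = M := one_mul M
    obtain ⟨x, hx⟩ := lt_iSup_iff.mp (hMdef ▸ h1)
    exact ⟨x, (ENNReal.lt_div_iff_mul_lt (Or.inl hM0) (Or.inl hM)).mpr hx⟩
  have hg's : ∀ s : ℝ≥0∞, s < 1 → ∃ y, s < g' y := by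
    intro s hs
    have h1 : s * N < N := by
      calc s * N < 1 * N := ENNReal.mul_lt_mul_left hN0 hN hs
        _ = N := one_mul N
    obtain ⟨y, hy⟩ := lt_iSup_iff.mp (hNdef ▸ h1)
    exact ⟨y, (ENNReal.lt_div_iff_mul_lt (Or.inl hN0) (Or.inl hN)).mpr hy⟩
  have hf' : Measurable f' := hf.div measurable_const
  have hg' : Measurable g' := hg.div measurable_const
  have hh' : Measurable h' := hh.div measurable_const
  have key := (ennreal_amgm ht0 ht1 (∫⁻ x, f' x) (∫⁻ y, g' y)).trans
    (pl_core ht0 ht1 hf' hg' hh' hf'1 hg'1 hf's hg's hcond')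
  have hif : ∫⁻ x, f' x = (∫⁻ x, f x) / M := by
    simp only [hf'def, div_eq_mul_inv]
    rw [lintegral_mul_const' _ _ (ENNReal.inv_ne_top.mpr hM0)]
  have hig : ∫⁻ y, g' y = (∫⁻ y, g y) / N := by
    simp only [hg'def, div_eq_mul_inv]
    rw [lintegral_mul_const' _ _ (ENNReal.inv_ne_top.mpr hN0)]
  have hih : ∫⁻ z, h' z = (∫⁻ z, h z) / c := by
    simp only [hh'def, div_eq_mul_inv]
    rw [lintegral_mul_const' _ _ (ENNReal.inv_ne_top.mpr hc0)]
  rw [hif, hig, hih] at key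
  rw [ENNReal.div_rpow_of_nonneg _ _ h1t.le, ENNReal.div_rpow_of_nonneg _ _ ht0.le,
    hdivmul] at key
  calc (∫⁻ x, f x) ^ (1 - t) * (∫⁻ y, g y) ^ t
      = (∫⁻ x, f x) ^ (1 - t) * (∫⁻ y, g y) ^ t / c * c := (ENNReal.div_mul_cancel hc0 hct).symm
    _ ≤ (∫⁻ z, h z) / c * c := mul_le_mul_left key c
    _ = ∫⁻ z, h z := ENNReal.div_mul_cancel hc0 hct

lemma pl_dim_one {t : ℝ} (ht0 : 0 < t) (ht1 : t < 1)
    {f g h : ℝ → ℝ≥0∞} (hf : Measurable f) (hg : Measurable g) (hh : Measurable h)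
    (hcond : ∀ x y, f x ^ (1 - t) * g y ^ t ≤ h ((1 - t) • x + t • y)) :
    (∫⁻ x, f x) ^ (1 - t) * (∫⁻ y, g y) ^ t ≤ ∫⁻ z, h z := by
  have h1t : (0:ℝ) < 1 - t := by linarith
  set fn := fun (n : ℕ) (x : ℝ) => min (f x) n with hfn
  set gn := fun (n : ℕ) (y : ℝ) => min (g y) n with hgn
  have hsup_min : ∀ a : ℝ≥0∞, ⨆ n : ℕ, min a n = a := by
    intro a
    apply le_antisymm (iSup_le fun n => min_le_left _ _)
    rcases eq_or_ne a ⊤ with rfl | ha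
    · have : ∀ n : ℕ, min ⊤ (n:ℝ≥0∞) = n := fun n => min_eq_right le_top
      calc (⊤:ℝ≥0∞) = ⨆ n : ℕ, (n:ℝ≥0∞) := ENNReal.iSup_natCast.symm
        _ ≤ ⨆ n : ℕ, min ⊤ (n:ℝ≥0∞) := by simp [this]
    · obtain ⟨n, hn⟩ := ENNReal.exists_nat_gt ha
      exact le_iSup_of_le n (le_of_eq (min_eq_left hn.le).symm)
  have hbounded : ∀ n m : ℕ, (∫⁻ x, fn n x) ^ (1 - t) * (∫⁻ y, gn m y) ^ t ≤ ∫⁻ z, h z := by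
    intro n m
    apply pl_dim_one_bounded ht0 ht1 (hf.min measurable_const) (hg.min measurable_const) hh
    · exact fun htop => (ENNReal.natCast_ne_top n)
        (top_le_iff.mp (htop ▸ iSup_le fun x => min_le_right _ _) ▸ rfl)
    · exact fun htop => (ENNReal.natCast_ne_top m)
        (top_le_iff.mp (htop ▸ iSup_le fun y => min_le_right _ _) ▸ rfl)
    · intro x y
      refine le_trans ?_ (hcond x y)
      exact mul_le_mul' (ENNReal.rpow_le_rpow (min_le_left _ _) h1t.le)
        (ENNReal.rpow_le_rpow (min_le_left _ _) ht0.le)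
  have hfmono : Monotone fn := by
    intro n m hnm x
    exact min_le_min le_rfl (Nat.cast_le.mpr hnm)
  have hgmono : Monotone gn := by
    intro n m hnm y
    exact min_le_min le_rfl (Nat.cast_le.mpr hnm)
  have hif : ∫⁻ x, f x = ⨆ n, ∫⁻ x, fn n x := by
    rw [← lintegral_iSup (fun n => hf.min measurable_const) hfmono]
    congr 1
    funext x
    exact (hsup_min (f x)).symm ▸ rfl
  have hig : ∫⁻ y, g y = ⨆ n, ∫⁻ y, gn n y := by
    rw [← lintegral_iSup (fun n => hg.min measurable_const) hgmono]
    congr 1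
    funext y
    exact (hsup_min (g y)).symm ▸ rfl
  rw [hif, hig, iSup_rpow_mono h1t, iSup_rpow_mono ht0, ENNReal.iSup_mul]
  apply iSup_le
  intro n
  rw [ENNReal.mul_iSup]
  exact iSup_le fun m => hbounded n m

lemma pl_pi {t : ℝ} (ht0 : 0 < t) (ht1 : t < 1) :
    ∀ (n : ℕ) (f g h : (Fin n → ℝ) → ℝ≥0∞), Measurable f → Measurable g → Measurable h →
    (∀ x y, f x ^ (1 - t) * g y ^ t ≤ h ((1 - t) • x + t • y)) →
    (∫⁻ x, f x) ^ (1 - t) * (∫⁻ y, g y) ^ t ≤ ∫⁻ z, h z := by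
  have h1t : (0:ℝ) < 1 - t := by linarith
  intro n
  induction n with
  | zero =>
    intro f g h hf hg hh hcond
    rw [lintegral_unique, lintegral_unique, lintegral_unique]
    have huniv : (volume : Measure (Fin 0 → ℝ)) Set.univ = 1 := by
      rw [MeasureTheory.volume_pi, Measure.pi_univ]
      simp
    rw [huniv, mul_one, mul_one, mul_one]
    have h0 := hcond default default
    have heq : ((1 - t) • (default : Fin 0 → ℝ) + t • default) = default := Subsingleton.elim _ _
    rw [heq] at h0
    simp only [Unique.eq_default] at h0 ⊢
    exact h0
  | succ n IH =>
    intro f g h hf hg hh hcond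
    set e := MeasurableEquiv.piFinSuccAbove (fun _ : Fin (n+1) => ℝ) 0 with he
    have hmp : MeasurePreserving e volume volume :=
      volume_preserving_piFinSuccAbove (fun _ : Fin (n+1) => ℝ) 0
    have helin : ∀ (c : ℝ) (x y : Fin (n+1) → ℝ), e (c • x + y) = c • e x + e y := by
      intro c x y
      rfl
    have hsymm_lin : ∀ (p q : ℝ × (Fin n → ℝ)),
        e.symm ((1 - t) • p + t • q) = (1 - t) • e.symm p + t • e.symm q := by
      intro p q
      apply e.injective
      rw [MeasurableEquiv.apply_symm_apply]
      rfl
    set f' := fun p : ℝ × (Fin n → ℝ) => f (e.symm p) with hf'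
    set g' := fun p : ℝ × (Fin n → ℝ) => g (e.symm p) with hg'
    set h' := fun p : ℝ × (Fin n → ℝ) => h (e.symm p) with hh'
    have hf'm : Measurable f' := hf.comp e.symm.measurable
    have hg'm : Measurable g' := hg.comp e.symm.measurable
    have hh'm : Measurable h' := hh.comp e.symm.measurable
    set F := fun a : ℝ => ∫⁻ x, f' (a, x) with hF
    set G := fun a : ℝ => ∫⁻ x, g' (a, x) with hG
    set H := fun a : ℝ => ∫⁻ x, h' (a, x) with hH
    have hFm : Measurable F := hf'm.lintegral_prod_right'
    have hGm : Measurable G := hg'm.lintegral_prod_right'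
    have hHm : Measurable H := hh'm.lintegral_prod_right'
    have hcondFGH : ∀ a b : ℝ, F a ^ (1 - t) * G b ^ t ≤ H ((1 - t) • a + t • b) := by
      intro a b
      apply IH (fun x => f' (a, x)) (fun y => g' (b, y))
        (fun z => h' ((1 - t) • a + t • b, z))
        (hf'm.comp measurable_prodMk_left) (hg'm.comp measurable_prodMk_left)
        (hh'm.comp measurable_prodMk_left)
      intro x y
      have hpt : ((1 - t) • a + t • b, (1 - t) • x + t • y)
          = (1 - t) • ((a, x) : ℝ × (Fin n → ℝ)) + t • (b, y) := rfl
      calc f' (a, x) ^ (1 - t) * g' (b, y) ^ t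
          = f (e.symm (a, x)) ^ (1 - t) * g (e.symm (b, y)) ^ t := rfl
        _ ≤ h ((1 - t) • e.symm (a, x) + t • e.symm (b, y)) := hcond _ _
        _ = h' ((1 - t) • ((a, x) : ℝ × (Fin n → ℝ)) + t • (b, y)) := by
            rw [hh']; simp only []; rw [hsymm_lin]
        _ = h' ((1 - t) • a + t • b, (1 - t) • x + t • y) := by rw [hpt]
    have hkey := pl_dim_one ht0 ht1 hFm hGm hHm hcondFGH
    have hprod : ∀ (φ : (Fin (n+1) → ℝ) → ℝ≥0∞), Measurable φ →
        ∫⁻ a, ∫⁻ x, φ (e.symm (a, x)) = ∫⁻ x, φ x := by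
      intro φ hφ
      have h1 : ∫⁻ p, φ (e.symm p) ∂(volume : Measure (ℝ × (Fin n → ℝ))) = ∫⁻ x, φ x :=
        (MeasurePreserving.symm e hmp).lintegral_comp hφ
      rw [← h1, Measure.volume_eq_prod _ _,
        lintegral_prod (fun p => φ (e.symm p)) (hφ.comp e.symm.measurable).aemeasurable]
    rw [hF, hG, hH] at hkey
    simp only [hf', hg', hh'] at hkey
    rwa [hprod f hf, hprod g hg, hprod h hh] at hkey

lemma pl_euclidean {d : ℕ} {t : ℝ} (ht0 : 0 < t) (ht1 : t < 1)
    {f g h : EuclideanSpace ℝ (Fin d) → ℝ≥0∞}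
    (hf : Measurable f) (hg : Measurable g) (hh : Measurable h)
    (hcond : ∀ x y, f x ^ (1 - t) * g y ^ t ≤ h ((1 - t) • x + t • y)) :
    (∫⁻ x, f x) ^ (1 - t) * (∫⁻ y, g y) ^ t ≤ ∫⁻ z, h z := by
  set e := (MeasurableEquiv.toLp 2 (Fin d → ℝ)).symm with he
  have hmp : MeasurePreserving e volume volume :=
    EuclideanSpace.volume_preserving_symm_measurableEquiv_toLp (Fin d)
  have hmps : MeasurePreserving e.symm volume volume := MeasurePreserving.symm e hmp
  have htr : ∀ (φ : EuclideanSpace ℝ (Fin d) → ℝ≥0∞), Measurable φ →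
      ∫⁻ p, φ (e.symm p) = ∫⁻ x, φ x := fun φ hφ => hmps.lintegral_comp hφ
  have key := pl_pi ht0 ht1 d (fun p => f (e.symm p)) (fun p => g (e.symm p))
    (fun p => h (e.symm p)) (hf.comp e.symm.measurable) (hg.comp e.symm.measurable)
    (hh.comp e.symm.measurable) ?_
  · rwa [htr f hf, htr g hg, htr h hh] at key
  · intro x y
    have : e.symm ((1 - t) • x + t • y) = (1 - t) • e.symm x + t • e.symm y := rfl
    rw [this]
    exact hcond _ _

lemma real_combined {t : ℝ} (ht0 : 0 < t) (ht1 : t < 1)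
    {vx wy uz Vx Vy Vz A : ℝ} (hv : 0 ≤ vx) (hw : 0 ≤ wy)
    (hVz : Vz ≤ (1 - t) * Vx + t * Vy - A)
    (hc : Real.exp (-A) * vx ^ (1 - t) * wy ^ t ≤ uz) :
    (vx * Real.exp (-Vx)) ^ (1 - t) * (wy * Real.exp (-Vy)) ^ t ≤ uz * Real.exp (-Vz) := by
  have h1t : (0:ℝ) < 1 - t := by linarith
  have hP : 0 ≤ vx ^ (1 - t) * wy ^ t :=
    mul_nonneg (Real.rpow_nonneg hv _) (Real.rpow_nonneg hw _)
  calc (vx * Real.exp (-Vx)) ^ (1 - t) * (wy * Real.exp (-Vy)) ^ t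
      = vx ^ (1 - t) * wy ^ t * (Real.exp (-Vx) ^ (1 - t) * Real.exp (-Vy) ^ t) := by
        rw [Real.mul_rpow hv (Real.exp_pos _).le, Real.mul_rpow hw (Real.exp_pos _).le]
        ring
    _ = vx ^ (1 - t) * wy ^ t * (Real.exp (-A) * Real.exp (-((1 - t) * Vx + t * Vy - A))) := by
        rw [← Real.exp_mul, ← Real.exp_mul, ← Real.exp_add, ← Real.exp_add]
        ring_nf
    _ ≤ vx ^ (1 - t) * wy ^ t * (Real.exp (-A) * Real.exp (-Vz)) := by
        apply mul_le_mul_of_nonneg_left _ hP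
        apply mul_le_mul_of_nonneg_left _ (Real.exp_pos _).le
        exact Real.exp_le_exp.mpr (by linarith)
    _ = (Real.exp (-A) * vx ^ (1 - t) * wy ^ t) * Real.exp (-Vz) := by ring
    _ ≤ uz * Real.exp (-Vz) := mul_le_mul_of_nonneg_right hc (Real.exp_pos _).le

/-- The curved Prékopa–Leindler inequality for a strongly log-concave measure
`μ = e^{-V} dx`: if `u((1-t)x + ty) ≥ e^{-t(1-t)|x-y|²/2} v(x)^{1-t} w(y)^t`, then
`∫ u dμ ≥ (∫ v dμ)^{1-t} (∫ w dμ)^t`. -/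
theorem lintegral_prekopaLeindler_stronglyLogConcave (d : ℕ) (t : ℝ)
    (ht : t ∈ Set.Ioo (0:ℝ) 1)
    (V : EuclideanSpace ℝ (Fin d) → ℝ) (hV : Measurable V)
    (hVconv : ∀ x y : EuclideanSpace ℝ (Fin d), ∀ s ∈ Set.Ioo (0:ℝ) 1,
      V ((1 - s) • x + s • y)
        ≤ (1 - s) * V x + s * V y - s * (1 - s) * ‖x - y‖ ^ 2 / 2)
    (u v w : EuclideanSpace ℝ (Fin d) → ℝ)
    (hu : Measurable u) (hv : Measurable v) (hw : Measurable w)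
    (hu0 : ∀ x, 0 ≤ u x) (hv0 : ∀ x, 0 ≤ v x) (hw0 : ∀ x, 0 ≤ w x)
    (hcond : ∀ x y : EuclideanSpace ℝ (Fin d),
      Real.exp (-(t * (1 - t) * ‖x - y‖ ^ 2 / 2)) * v x ^ (1 - t) * w y ^ t
        ≤ u ((1 - t) • x + t • y)) :
    (∫⁻ x, ENNReal.ofReal (v x)
          ∂(volume.withDensity fun x => ENNReal.ofReal (Real.exp (-V x)))) ^ (1 - t)
        * (∫⁻ y, ENNReal.ofReal (w y)
          ∂(volume.withDensity fun x => ENNReal.ofReal (Real.exp (-V x)))) ^ t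
      ≤ ∫⁻ z, ENNReal.ofReal (u z)
          ∂(volume.withDensity fun x => ENNReal.ofReal (Real.exp (-V x))) := by
  obtain ⟨ht0, ht1⟩ := ht
  have h1t : (0:ℝ) < 1 - t := by linarith
  have hexp : Measurable fun x : EuclideanSpace ℝ (Fin d) => Real.exp (-V x) :=
    Real.measurable_exp.comp hV.neg
  have hρm : Measurable fun x : EuclideanSpace ℝ (Fin d) => ENNReal.ofReal (Real.exp (-V x)) :=
    hexp.ennreal_ofReal
  have hint : ∀ (φ : EuclideanSpace ℝ (Fin d) → ℝ), Measurable φ → (∀ x, 0 ≤ φ x) →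
      ∫⁻ x, ENNReal.ofReal (φ x)
          ∂(volume.withDensity fun x => ENNReal.ofReal (Real.exp (-V x)))
        = ∫⁻ x, ENNReal.ofReal (φ x * Real.exp (-V x)) := by
    intro φ hφ hφ0
    rw [lintegral_withDensity_eq_lintegral_mul volume hρm hφ.ennreal_ofReal]
    apply lintegral_congr
    intro x
    simp only [Pi.mul_apply]
    rw [← ENNReal.ofReal_mul (Real.exp_pos _).le, mul_comm]
  have hFm : Measurable fun x => ENNReal.ofReal (v x * Real.exp (-V x)) :=
    (hv.mul hexp).ennreal_ofReal
  have hGm : Measurable fun x => ENNReal.ofReal (w x * Real.exp (-V x)) :=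
    (hw.mul hexp).ennreal_ofReal
  have hHm : Measurable fun x => ENNReal.ofReal (u x * Real.exp (-V x)) :=
    (hu.mul hexp).ennreal_ofReal
  have hcond' : ∀ x y : EuclideanSpace ℝ (Fin d),
      ENNReal.ofReal (v x * Real.exp (-V x)) ^ (1 - t)
        * ENNReal.ofReal (w y * Real.exp (-V y)) ^ t
      ≤ ENNReal.ofReal (u ((1 - t) • x + t • y) * Real.exp (-V ((1 - t) • x + t • y))) := by
    intro x y
    rw [ENNReal.ofReal_rpow_of_nonneg (mul_nonneg (hv0 x) (Real.exp_pos _).le) h1t.le,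
      ENNReal.ofReal_rpow_of_nonneg (mul_nonneg (hw0 y) (Real.exp_pos _).le) ht0.le,
      ← ENNReal.ofReal_mul (Real.rpow_nonneg (mul_nonneg (hv0 x) (Real.exp_pos _).le) _)]
    apply ENNReal.ofReal_le_ofReal
    apply real_combined ht0 ht1 (hv0 x) (hw0 y) (A := t * (1 - t) * ‖x - y‖ ^ 2 / 2)
    · have := hVconv x y t ⟨ht0, ht1⟩
      linarith
    · exact hcond x y
  have key := pl_euclidean ht0 ht1 hFm hGm hHm hcond'
  rw [hint v hv hv0, hint w hw hw0, hint u hu hu0]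
  exact key
end
end
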